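/- arXiv:1806.01719 — 2 statements merged into one kernel-verified Lean document; each statement's English description precedes it below -/
import Mathlib

section
/- Let M(a, κ) = c κ I_1(a)/I_0(a) with a constant c > 0, and suppose c κ ≤ 1 in the sense that κ ≤ κ_♯ where κ_♯ is defined by c κ_♯ = 1. Then the equation M(a,κ) = a has no solution with a > 0; i.e., the only fixed point of a ↦ cκ I_1(a)/I_0(a) on [0,∞) is a = 0. -/
open Real

/-- The modified Bessel function of the first kind of integer order `n`,
`I_n(a) = (1/π) ∫_0^π e^{a cos θ} cos(nθ) dθ`. -/
noncomputable def besselI (n : ℕ) (a : ℝ) : ℝ :=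
  (1 / π) * ∫ θ in (0 : ℝ)..π, Real.exp (a * Real.cos θ) * Real.cos (n * θ)

/-!
Integrating by parts, `I₁(a) = a · (1/π) ∫₀^π e^{a cos θ} sin² θ dθ`. The integral is
nonnegative, and it is strictly smaller than `∫₀^π e^{a cos θ} dθ = π I₀(a)` because
`sin² θ < 1` away from `θ = π/2`. Hence `0 ≤ I₁(a)/I₀(a) < a` for `a > 0`, so a fixed point
`a > 0` with `cκ ≤ 1` would give `a = cκ I₁(a)/I₀(a) ≤ I₁(a)/I₀(a) < a`.
-/

open intervalIntegral

theorem integral_exp_mul_cos_mul_cos (a : ℝ) :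
    ∫ θ in (0 : ℝ)..π, Real.exp (a * Real.cos θ) * Real.cos θ =
      a * ∫ θ in (0 : ℝ)..π, Real.exp (a * Real.cos θ) * Real.sin θ ^ 2 := by
  have hu (θ : ℝ) : HasDerivAt (fun θ => Real.exp (a * Real.cos θ))
      (Real.exp (a * Real.cos θ) * (a * -Real.sin θ)) θ :=
    ((hasDerivAt_cos θ).const_mul a).exp
  rw [integral_mul_deriv_eq_deriv_mul (fun θ _ => hu θ) (fun θ _ => hasDerivAt_sin θ)
    (by apply Continuous.intervalIntegrable; fun_prop)
    (by apply Continuous.intervalIntegrable; fun_prop), sin_pi, sin_zero,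
    ← integral_const_mul]
  simp only [mul_zero, sub_zero, zero_sub, ← integral_neg]
  congr 1
  ext θ
  ring

theorem besselI_zero_eq (a : ℝ) :
    besselI 0 a = (1 / π) * ∫ θ in (0 : ℝ)..π, Real.exp (a * Real.cos θ) := by
  simp [besselI]

theorem besselI_one_eq (a : ℝ) :
    besselI 1 a =
      a * ((1 / π) * ∫ θ in (0 : ℝ)..π, Real.exp (a * Real.cos θ) * Real.sin θ ^ 2) := by
  rw [besselI, Nat.cast_one]
  simp only [one_mul]
  rw [integral_exp_mul_cos_mul_cos]
  ring

theorem integral_exp_mul_cos_mul_sin_sq_lt (a : ℝ) :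
    ∫ θ in (0 : ℝ)..π, Real.exp (a * Real.cos θ) * Real.sin θ ^ 2 <
      ∫ θ in (0 : ℝ)..π, Real.exp (a * Real.cos θ) := by
  have hcont : Continuous fun θ => Real.exp (a * Real.cos θ) * Real.cos θ ^ 2 := by fun_prop
  have hpos : 0 < ∫ θ in (0 : ℝ)..π, Real.exp (a * Real.cos θ) * Real.cos θ ^ 2 := by
    rw [← integral_add_adjacent_intervals (b := π / 2) (hcont.intervalIntegrable _ _)
      (hcont.intervalIntegrable _ _)]
    refine add_pos_of_pos_of_nonneg ?_ ?_
    · refine intervalIntegral_pos_of_pos_on (hcont.intervalIntegrable _ _) (fun θ hθ => ?_)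
        pi_div_two_pos
      have := cos_pos_of_mem_Ioo ⟨by linarith [hθ.1, pi_pos], hθ.2⟩
      positivity
    · exact integral_nonneg (by linarith [pi_pos]) fun θ _ => by positivity
  have hsplit : ∫ θ in (0 : ℝ)..π, Real.exp (a * Real.cos θ) =
      (∫ θ in (0 : ℝ)..π, Real.exp (a * Real.cos θ) * Real.sin θ ^ 2) +
        ∫ θ in (0 : ℝ)..π, Real.exp (a * Real.cos θ) * Real.cos θ ^ 2 := by
    rw [← integral_add (by apply Continuous.intervalIntegrable; fun_prop)
      (hcont.intervalIntegrable _ _)]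
    congr 1
    ext θ
    rw [← mul_add, sin_sq_add_cos_sq, mul_one]
  linarith

theorem besselI_zero_pos (a : ℝ) : 0 < besselI 0 a := by
  rw [besselI_zero_eq]
  exact mul_pos (by positivity) (intervalIntegral_pos_of_pos_on
    (by apply Continuous.intervalIntegrable; fun_prop) (fun θ _ => exp_pos _) pi_pos)

theorem besselI_one_nonneg {a : ℝ} (ha : 0 ≤ a) : 0 ≤ besselI 1 a := by
  rw [besselI_one_eq]
  exact mul_nonneg ha (mul_nonneg (by positivity)
    (integral_nonneg pi_pos.le fun θ _ => by positivity))

theorem besselI_one_lt_mul_besselI_zero {a : ℝ} (ha : 0 < a) : besselI 1 a < a * besselI 0 a := by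
  rw [besselI_one_eq, besselI_zero_eq]
  gcongr
  exact integral_exp_mul_cos_mul_sin_sq_lt a

theorem kuramoto_subcritical_unique_fixed_point_general (c κ : ℝ)
    (hsub : c * κ ≤ 1) (a : ℝ) (ha : 0 ≤ a)
    (hfix : c * κ * (besselI 1 a / besselI 0 a) = a) : a = 0 := by
  by_contra hne
  have ha' : 0 < a := ha.lt_of_ne' hne
  set r := besselI 1 a / besselI 0 a
  have hr0 : 0 ≤ r := div_nonneg (besselI_one_nonneg ha) (besselI_zero_pos a).le
  have hra : r < a := (div_lt_iff₀ (besselI_zero_pos a)).2 (besselI_one_lt_mul_besselI_zero ha')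
  have har : a ≤ r := hfix ▸ mul_le_of_le_one_left hr0 hsub
  exact hra.not_ge har

/-- Below the critical coupling, the Kuramoto self-consistency equation
`c κ I₁(a)/I₀(a) = a` has only the trivial solution `a = 0` on `[0, ∞)`. -/
theorem kuramoto_subcritical_unique_fixed_point (c κ : ℝ) (hc : 0 < c) (hκ : 0 < κ)
    (hsub : c * κ ≤ 1) (a : ℝ) (ha : 0 ≤ a)
    (hfix : c * κ * (besselI 1 a / besselI 0 a) = a) : a = 0 :=
  kuramoto_subcritical_unique_fixed_point_general c κ hsub a ha hfix
end

section
/- Let r_n(a) = I_{n+1}(a)/I_n(a) be ratios of modified Bessel functions. Then for all a ≥ 0 and n ≥ 0, a/(n + 1 + √(a² + (n+1)²)) ≤ r_n(a) ≤ a/(n + √(a² + (n+2)²)). -/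
/-!
By the recurrence `2(n+1) I_{n+1} = a (I_n - I_{n+2})`, the ratios satisfy `r_n = T_n(r_{n+1})` with
`T_n(x) = a / (2(n+1) + a x)`, a decreasing map which on `[0, ∞)` is a contraction with constant
`(a / (2(n+1)))²`. The lower Amos bound is the fixed point of `T_n`, the upper one is `T_n` applied
to the lower bound of index `n+1`, and the upper bound of index `n+1` lies below the lower bound of
index `n`. Hence the amount `e_n ≥ 0` by which `r_n` violates either bound satisfies
`e_n ≤ (a / (2(n+1)))² e_{n+1}`; since `e_n` is bounded and the constants tend to `0`, `e_n = 0`.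
Positivity of `I_n(a)`, needed to divide, comes from expanding `e^{a cos θ}` in powers of `cos θ`,
whose moments against `cos nθ` on `[0, π]` are nonnegative, and positive for the `n`-th power.
-/

open Real

open Filter Topology intervalIntegral
open scoped Nat

noncomputable def cosMoment (k : ℕ) (n : ℤ) : ℝ :=
  ∫ θ in (0 : ℝ)..π, cos θ ^ k * cos (n * θ)

theorem cosMoment_zero_of_ne_zero {n : ℤ} (hn : n ≠ 0) : cosMoment 0 n = 0 := by
  simp [cosMoment, integral_comp_mul_left (fun x => cos x) (Int.cast_ne_zero.mpr hn),
    sin_int_mul_pi]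

theorem cosMoment_zero_zero : cosMoment 0 0 = π := by
  simp [cosMoment]

theorem cosMoment_succ (k : ℕ) (n : ℤ) :
    cosMoment (k + 1) n = (cosMoment k (n + 1) + cosMoment k (n - 1)) / 2 := by
  have hprod (θ : ℝ) : cos θ ^ (k + 1) * cos (n * θ) =
      (cos θ ^ k * cos ((n + 1 : ℤ) * θ) + cos θ ^ k * cos ((n - 1 : ℤ) * θ)) / 2 := by
    push_cast
    rw [add_mul, sub_mul, one_mul, cos_add, cos_sub]
    ring
  simp only [cosMoment, hprod]
  rw [integral_div, integral_add (by apply Continuous.intervalIntegrable; fun_prop)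
    (by apply Continuous.intervalIntegrable; fun_prop)]

theorem cosMoment_nonneg (k : ℕ) (n : ℤ) : 0 ≤ cosMoment k n := by
  induction k generalizing n with
  | zero =>
    rcases eq_or_ne n 0 with rfl | hn
    · exact cosMoment_zero_zero ▸ pi_pos.le
    · exact (cosMoment_zero_of_ne_zero hn).ge
  | succ k ih =>
    rw [cosMoment_succ]
    have := ih (n + 1)
    have := ih (n - 1)
    positivity

theorem cosMoment_self_pos (n : ℕ) : 0 < cosMoment n n := by
  induction n with
  | zero => exact cosMoment_zero_zero ▸ pi_pos
  | succ n ih =>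
    rw [cosMoment_succ, Nat.cast_succ, add_sub_cancel_right]
    have := cosMoment_nonneg n (n + 1 + 1)
    positivity

theorem hasSum_integral_exp_mul_cos (n : ℕ) (a : ℝ) :
    HasSum (fun k : ℕ => a ^ k / k ! * cosMoment k n)
      (∫ θ in (0 : ℝ)..π, exp (a * cos θ) * cos (n * θ)) := by
  have hterm (k : ℕ) : ∫ θ in (0 : ℝ)..π, (a * cos θ) ^ k / k ! * cos (n * θ) =
      a ^ k / k ! * cosMoment k n := by
    rw [cosMoment, ← integral_const_mul]
    congr 1 with θ
    push_cast
    ring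
  simp only [← hterm]
  refine hasSum_integral_of_dominated_convergence (fun k _ => |a| ^ k / k !)
    (fun k => by fun_prop) (fun k => MeasureTheory.ae_of_all _ fun θ _ => ?_)
    (MeasureTheory.ae_of_all _ fun _ _ => summable_pow_div_factorial |a|) intervalIntegrable_const
    (MeasureTheory.ae_of_all _ fun θ _ => ?_)
  · rw [norm_mul, norm_div, norm_pow, Real.norm_eq_abs, Real.norm_eq_abs, Real.norm_eq_abs,
      Nat.abs_cast, abs_mul]
    have := abs_cos_le_one θ
    calc (|a| * |cos θ|) ^ k / k ! * |cos (n * θ)| ≤ (|a| * 1) ^ k / k ! * 1 := by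
          gcongr
          exact abs_cos_le_one _
      _ = |a| ^ k / k ! := by ring
  · rw [exp_eq_exp_ℝ]
    exact (NormedSpace.expSeries_div_hasSum_exp (a * cos θ)).mul_right _

theorem besselI_pos (n : ℕ) {a : ℝ} (ha : 0 < a) : 0 < besselI n a := by
  have hsum := (hasSum_integral_exp_mul_cos n a).mul_left (1 / π)
  refine lt_of_lt_of_le ?_ (le_hasSum hsum n fun k _ => ?_)
  · have := cosMoment_self_pos n
    positivity
  · have := cosMoment_nonneg k n
    positivity

theorem besselI_recurrence (n : ℕ) (a : ℝ) :
    2 * (n + 1) * besselI (n + 1) a = a * (besselI n a - besselI (n + 2) a) := by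
  -- Integrate the derivative of `e^{a cos θ} sin((n+1)θ)`, which vanishes at `0` and `π`;
  -- `sin θ sin((n+1)θ) = (cos nθ - cos((n+2)θ)) / 2` turns it into Bessel integrands.
  have hderiv (θ : ℝ) : HasDerivAt (fun θ => exp (a * cos θ) * sin ((n + 1) * θ))
      ((n + 1) * (exp (a * cos θ) * cos ((n + 1) * θ))
        + a / 2 * (exp (a * cos θ) * cos ((n + 2) * θ))
        - a / 2 * (exp (a * cos θ) * cos (n * θ))) θ := by
    refine (((hasDerivAt_cos θ).const_mul a).exp.mul
      (((hasDerivAt_id θ).const_mul ((n : ℝ) + 1)).sin)).congr_deriv ?_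
    rw [show ((n : ℝ) + 2) * θ = (n + 1) * θ + θ by ring,
      show (n : ℝ) * θ = (n + 1) * θ - θ by ring, cos_add, cos_sub]
    simp only [id, mul_one]
    ring
  have hint (x : ℝ) :
      IntervalIntegrable (fun θ => exp (a * cos θ) * cos (x * θ)) MeasureTheory.volume 0 π := by
    apply Continuous.intervalIntegrable; fun_prop
  have hzero := integral_eq_sub_of_hasDerivAt (a := 0) (b := π) (fun θ _ => hderiv θ)
    (by apply Continuous.intervalIntegrable; fun_prop)
  rw [integral_sub ((hint _).const_mul _ |>.add ((hint _).const_mul _)) ((hint _).const_mul _),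
    integral_add ((hint _).const_mul _) ((hint _).const_mul _), integral_const_mul,
    integral_const_mul, integral_const_mul] at hzero
  have hsin : sin (((n : ℝ) + 1) * π) = 0 := by exact_mod_cast sin_nat_mul_pi (n + 1)
  simp only [hsin, sin_zero, mul_zero, sub_zero] at hzero
  simp only [besselI]
  push_cast
  field_simp
  linear_combination 2 * hzero

theorem besselI_succ_zero (n : ℕ) : besselI (n + 1) 0 = 0 := by
  have h := besselI_recurrence n 0
  rw [zero_mul] at h
  exact (mul_eq_zero.mp h).resolve_left (by positivity)

theorem mul_div_add_sqrt_sq_add_sq (a : ℝ) {t : ℝ} (ht : 0 < t) :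
    a * (a / (t + √(a ^ 2 + t ^ 2))) = √(a ^ 2 + t ^ 2) - t := by
  have hsq : √(a ^ 2 + t ^ 2) ^ 2 = a ^ 2 + t ^ 2 := sq_sqrt (by positivity)
  field_simp
  linear_combination -hsq

theorem div_add_mul_sub_div_add_mul_le {a c x y : ℝ} (ha : 0 ≤ a) (hc : 0 < c) (hx : 0 ≤ x)
    (hy : 0 ≤ y) : a / (c + a * x) - a / (c + a * y) ≤ (a / c) ^ 2 * max (y - x) 0 := by
  rcases le_total y x with hyx | hxy
  · have : a / (c + a * x) ≤ a / (c + a * y) := by gcongr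
    have : 0 ≤ (a / c) ^ 2 * max (y - x) 0 := by positivity
    linarith
  · rw [max_eq_left (sub_nonneg.mpr hxy), div_sub_div _ _ (by positivity) (by positivity),
      div_pow, div_mul_eq_mul_div]
    have : 0 ≤ a * x := by positivity
    have : 0 ≤ a * y := by positivity
    apply div_le_div₀ (by nlinarith) (by nlinarith) (by positivity) (by nlinarith)

theorem eq_zero_of_le_mul_succ {e l : ℕ → ℝ} {M : ℝ} (he : ∀ m, 0 ≤ e m)
    (hM : ∀ m, e m ≤ M) (hl : Tendsto l atTop (𝓝 0)) (hrec : ∀ m, e m ≤ l m * e (m + 1))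
    (m : ℕ) : e m = 0 := by
  obtain ⟨N, hN⟩ := eventually_atTop.mp (hl.eventually (eventually_le_nhds one_half_pos))
  have htail (k : ℕ) : ∀ m ≥ N, e m ≤ (1 / 2) ^ k * M := by
    induction k with
    | zero => simpa using fun m _ => hM m
    | succ k ih =>
      intro m hm
      calc e m ≤ l m * e (m + 1) := hrec m
        _ ≤ 1 / 2 * ((1 / 2) ^ k * M) :=
          mul_le_mul (hN m hm) (ih (m + 1) (by omega)) (he _) one_half_pos.le
        _ = (1 / 2) ^ (k + 1) * M := by ring
  have hlim : Tendsto (fun k : ℕ => (1 / 2 : ℝ) ^ k * M) atTop (𝓝 0) := by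
    simpa using
      (tendsto_pow_atTop_nhds_zero_of_lt_one one_half_pos.le one_half_lt_one).mul_const M
  have hzero (d : ℕ) : ∀ m, N ≤ m + d → e m = 0 := by
    induction d with
    | zero => exact fun m hm => le_antisymm (ge_of_tendsto' hlim (htail · m hm)) (he m)
    | succ d ih =>
      intro m hm
      have := hrec m
      rw [ih (m + 1) (by omega), mul_zero] at this
      exact le_antisymm this (he m)
  exact hzero N m (by omega)

noncomputable def besselRatio (n : ℕ) (a : ℝ) : ℝ := besselI (n + 1) a / besselI n a

noncomputable def amosLower (n : ℕ) (a : ℝ) : ℝ := a / (n + 1 + √(a ^ 2 + (n + 1) ^ 2))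

noncomputable def amosUpper (n : ℕ) (a : ℝ) : ℝ := a / (n + √(a ^ 2 + (n + 2) ^ 2))

section AmosBounds

variable {a : ℝ}

theorem amosLower_eq (n : ℕ) :
    amosLower n a = a / (2 * (n + 1) + a * amosLower n a) := by
  rw [amosLower, mul_div_add_sqrt_sq_add_sq a (by positivity : (0 : ℝ) < n + 1)]
  ring_nf

theorem amosUpper_eq (n : ℕ) :
    amosUpper n a = a / (2 * (n + 1) + a * amosLower (n + 1) a) := by
  rw [amosLower, amosUpper]
  push_cast
  rw [show (n : ℝ) + 1 + 1 = n + 2 by ring,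
    mul_div_add_sqrt_sq_add_sq a (by positivity : (0 : ℝ) < n + 2)]
  ring_nf

theorem amosLower_nonneg (ha : 0 ≤ a) (n : ℕ) : 0 ≤ amosLower n a := by
  unfold amosLower; positivity

theorem amosUpper_nonneg (ha : 0 ≤ a) (n : ℕ) : 0 ≤ amosUpper n a := by
  unfold amosUpper; exact div_nonneg ha (by positivity)

theorem amosUpper_succ_le_amosLower (ha : 0 ≤ a) (n : ℕ) :
    amosUpper (n + 1) a ≤ amosLower n a := by
  unfold amosLower amosUpper
  push_cast
  gcongr <;> linarith

theorem besselRatio_nonneg (ha : 0 < a) (n : ℕ) : 0 ≤ besselRatio n a :=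
  div_nonneg (besselI_pos _ ha).le (besselI_pos _ ha).le

theorem besselRatio_eq (ha : 0 < a) (n : ℕ) :
    besselRatio n a = a / (2 * (n + 1) + a * besselRatio (n + 1) a) := by
  have h0 := besselI_pos n ha
  have h1 := besselI_pos (n + 1) ha
  have h2 := besselI_pos (n + 2) ha
  have hrec := besselI_recurrence n a
  unfold besselRatio
  rw [eq_div_iff (by positivity), div_mul_eq_mul_div, div_eq_iff h0.ne']
  field_simp
  linear_combination hrec

noncomputable def amosDefect (n : ℕ) (a : ℝ) : ℝ :=
  max (max (amosLower n a - besselRatio n a) (besselRatio n a - amosUpper n a)) 0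

theorem amosDefect_le_mul_succ (ha : 0 < a) (n : ℕ) :
    amosDefect n a ≤ (a / (2 * (n + 1))) ^ 2 * amosDefect (n + 1) a := by
  have hc : (0 : ℝ) < 2 * (n + 1) := by positivity
  have hr := besselRatio_nonneg ha (n + 1)
  have hF := amosLower_nonneg ha.le (n + 1)
  have hG := amosUpper_nonneg ha.le (n + 1)
  have hsq : 0 ≤ (a / (2 * (n + 1))) ^ 2 := by positivity
  have hexcess : max (besselRatio (n + 1) a - amosUpper (n + 1) a) 0 ≤ amosDefect (n + 1) a :=
    max_le_max (le_max_right _ _) le_rfl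
  have hdeficit : max (amosLower (n + 1) a - besselRatio (n + 1) a) 0 ≤ amosDefect (n + 1) a :=
    max_le_max (le_max_left _ _) le_rfl
  refine max_le (max_le ?_ ?_) (mul_nonneg hsq (le_max_right _ _))
  · calc amosLower n a - besselRatio n a
        ≤ a / (2 * (n + 1) + a * amosUpper (n + 1) a)
          - a / (2 * (n + 1) + a * besselRatio (n + 1) a) := by
          rw [amosLower_eq, ← besselRatio_eq ha]
          gcongr
          exact amosUpper_succ_le_amosLower ha.le n
      _ ≤ _ := (div_add_mul_sub_div_add_mul_le ha.le hc hG hr).trans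
          (mul_le_mul_of_nonneg_left hexcess hsq)
  · rw [besselRatio_eq ha, amosUpper_eq]
    exact (div_add_mul_sub_div_add_mul_le ha.le hc hr hF).trans
      (mul_le_mul_of_nonneg_left hdeficit hsq)

theorem amosDefect_le (ha : 0 < a) (n : ℕ) : amosDefect n a ≤ a := by
  have hstep {x : ℝ} (hx : 0 ≤ x) : a / (2 * (n + 1) + a * x) ≤ a :=
    div_le_self ha.le (by nlinarith [mul_nonneg ha.le hx])
  have hr := hstep (besselRatio_nonneg ha (n + 1))
  have hF := hstep (amosLower_nonneg ha.le n)
  rw [← besselRatio_eq ha] at hr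
  rw [← amosLower_eq] at hF
  have := besselRatio_nonneg ha n
  have := amosUpper_nonneg ha.le n
  refine max_le (max_le ?_ ?_) ha.le <;> linarith

theorem amosDefect_eq_zero (ha : 0 < a) (n : ℕ) : amosDefect n a = 0 := by
  have hl : Tendsto (fun m : ℕ => (a / (2 * (m + 1))) ^ 2) atTop (𝓝 0) := by
    have := ((tendsto_const_div_atTop_nhds_zero_nat (a / 2)).comp (tendsto_add_atTop_nat 1)).pow 2
    convert this using 2 with m
    · simp only [Function.comp_apply]
      push_cast
      field_simp
    · simp
  exact eq_zero_of_le_mul_succ (fun m => le_max_right _ _) (amosDefect_le ha) hl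
    (amosDefect_le_mul_succ ha) n

theorem amosLower_le_besselRatio (ha : 0 < a) (n : ℕ) : amosLower n a ≤ besselRatio n a := by
  have := (le_max_left _ _).trans ((le_max_left _ _).trans (amosDefect_eq_zero ha n).le)
  linarith

theorem besselRatio_le_amosUpper (ha : 0 < a) (n : ℕ) : besselRatio n a ≤ amosUpper n a := by
  have := (le_max_right _ _).trans ((le_max_left _ _).trans (amosDefect_eq_zero ha n).le)
  linarith

end AmosBounds

theorem amos_bounds_bessel_ratio (n : ℕ) (a : ℝ) (ha : 0 ≤ a) :
    a / (n + 1 + Real.sqrt (a ^ 2 + (n + 1) ^ 2)) ≤ besselI (n + 1) a / besselI n a ∧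
    besselI (n + 1) a / besselI n a ≤ a / (n + Real.sqrt (a ^ 2 + (n + 2) ^ 2)) := by
  rcases ha.eq_or_lt with rfl | ha
  · simp [besselI_succ_zero]
  · exact ⟨amosLower_le_besselRatio ha n, besselRatio_le_amosUpper ha n⟩
end
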